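/- Let p be a prime, let H_1, …, H_r be finite groups, let D = H_1 × ⋯ × H_r, let N be a subgroup of the center of D, and let G be a subgroup of the central product D/N such that for each i the full preimage Γ of G in D projects onto H_i. Then c_p(G) ≤ c_p(H_1) + ⋯ + c_p(H_r). -/

import Mathlib

/-!
`c_p` is additive on extensions, `c_p(G) = c_p(K) + c_p(G/K)` for `K ⊴ G`: a composition series
of `K` pushed into `G`, followed by one of `G/K` pulled back to `G`, is a composition series of
`G`, and by Jordan–Hölder (in the lattice of subgroups, the steps being maximal normal subgroups)
every composition series of `G` computes `c_p(G)`. So `c_p` does not increase on quotients and on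
normal subgroups. The preimage `Γ` maps onto `G`, and cutting `Γ ≤ H_1 × ⋯ × H_r` down by the
kernels of the coordinate projections one at a time bounds `c_p(Γ)` by the sum of the `c_p` of
the projections of `Γ`, which are the `H_i`.
-/

/-- A composition series of a group `G`: an ascending chain of subgroups from `⊥` to `⊤`
in which each term is normal in the next, with simple quotients. -/
structure GroupCompSeries (G : Type*) [Group G] where
  len : ℕ
  ser : Fin (len + 1) → Subgroup G
  ser_bot : ser 0 = ⊥
  ser_top : ser (Fin.last len) = ⊤
  ser_le : ∀ i : Fin len, ser i.castSucc ≤ ser i.succ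
  ser_normal : ∀ i : Fin len, ((ser i.castSucc).subgroupOf (ser i.succ)).Normal
  ser_simple : ∀ i : Fin len,
    haveI := ser_normal i
    IsSimpleGroup (↥(ser i.succ) ⧸ (ser i.castSucc).subgroupOf (ser i.succ))

/-- The number of factors of order `p` in a composition series. -/
noncomputable def GroupCompSeries.count {G : Type*} [Group G]
    (S : GroupCompSeries G) (p : ℕ) : ℕ := by
  classical
  exact (Finset.univ.filter fun i : Fin S.len =>
    Nat.card (↥(S.ser i.succ) ⧸ (S.ser i.castSucc).subgroupOf (S.ser i.succ)) = p).card

/-- `cp p G` is the number of composition factors of `G` of order `p`, counted with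
multiplicity in a composition series (well defined by Jordan–Hölder). -/
noncomputable def cp (p : ℕ) (G : Type*) [Group G] : ℕ := by
  classical
  exact if h : Nonempty (GroupCompSeries G) then h.some.count p else 0

/-- The constant `ε_q` of Theorem 1, for `q = p ^ f`. -/
noncomputable def epsq (p f : ℕ) : ℚ := by
  classical
  exact if p = 2 ∧ Even f then 4 / 3
    else if ∃ n : ℕ, p = 2 ^ 2 ^ n + 1 then p / (p - 1)
    else 1

/-- A subgroup of `GL(d, F)` acts irreducibly on its natural module. -/
def natIrreducible {F : Type*} [Field F] {d : ℕ}
    (G : Subgroup (Matrix.GeneralLinearGroup (Fin d) F)) : Prop :=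
  (⊥ : Submodule F (Fin d → F)) ≠ ⊤ ∧
  ∀ W : Submodule F (Fin d → F),
    (∀ g ∈ G, ∀ v ∈ W, Matrix.mulVec (g : Matrix (Fin d) (Fin d) F) v ∈ W) →
      W = ⊥ ∨ W = ⊤

namespace Subgroup

variable {G G' : Type*} [Group G] [Group G']

structure IsCompositionStep (A B : Subgroup G) : Prop where
  le : A ≤ B
  normal : (A.subgroupOf B).Normal
  isSimpleGroup_quotient : haveI := normal; IsSimpleGroup (B ⧸ A.subgroupOf B)

theorem IsCompositionStep.of_surjective {A B : Subgroup G} {Q : Type*} [Group Q]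
    [IsSimpleGroup Q] (hle : A ≤ B) (φ : B →* Q) (hφ : Function.Surjective φ)
    (hker : A.subgroupOf B = φ.ker) : IsCompositionStep A B := by
  have : (A.subgroupOf B).Normal := hker ▸ φ.normal_ker
  exact ⟨hle, this, (QuotientGroup.liftEquiv _ hφ hker).isSimpleGroup⟩

namespace IsCompositionStep

variable {A B C : Subgroup G}

theorem lt (h : IsCompositionStep A B) : A < B := by
  have := h.normal
  have : IsSimpleGroup (B ⧸ A.subgroupOf B) := h.isSimpleGroup_quotient
  refine h.le.lt_of_not_ge fun hBA => not_subsingleton (B ⧸ A.subgroupOf B) ?_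
  rw [QuotientGroup.subsingleton_iff]
  exact subgroupOf_eq_top.2 hBA

theorem le_or_sup_eq (hA : IsCompositionStep A C) (hB : IsCompositionStep B C) :
    B ≤ A ∨ A ⊔ B = C := by
  have := hA.normal
  have : IsSimpleGroup (C ⧸ A.subgroupOf C) := hA.isSimpleGroup_quotient
  rcases (hB.normal.map _ (QuotientGroup.mk'_surjective (A.subgroupOf C))).eq_bot_or_eq_top with
    hbot | htop
  · left
    rw [map_eq_bot_iff, QuotientGroup.ker_mk'] at hbot
    exact fun b hb => hbot (show (⟨b, hB.le hb⟩ : C) ∈ B.subgroupOf C from hb)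
  · right
    have := congrArg (comap (QuotientGroup.mk' (A.subgroupOf C))) htop
    rw [comap_map_eq, comap_top, QuotientGroup.ker_mk', ← subgroupOf_sup hB.le hA.le,
      subgroupOf_eq_top] at this
    exact le_antisymm (sup_le hA.le hB.le) (sup_comm A B ▸ this)

theorem sup_eq_of_ne (hA : IsCompositionStep A C) (hB : IsCompositionStep B C) (hne : A ≠ B) :
    A ⊔ B = C := by
  rcases hA.le_or_sup_eq hB with hBA | h
  · rcases hB.le_or_sup_eq hA with hAB | h
    · exact absurd (le_antisymm hAB hBA) hne
    · rwa [sup_comm]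
  · exact h

theorem inf_left {x y : Subgroup G} (hy : IsCompositionStep y (x ⊔ y)) :
    IsCompositionStep (x ⊓ y) x := by
  have := hy.normal
  have : IsSimpleGroup ((x ⊔ y : Subgroup G) ⧸ y.subgroupOf (x ⊔ y)) :=
    hy.isSimpleGroup_quotient
  have hx : x ≤ normalizer (y : Set G) :=
    le_sup_left.trans ((normal_subgroupOf_iff_le_normalizer hy.le).1 hy.normal)
  have := normal_subgroupOf_of_le_normalizer hx
  let e := QuotientGroup.quotientInfEquivProdNormalizerQuotient x y hx
  refine of_surjective inf_le_left (e.toMonoidHom.comp (QuotientGroup.mk' (y.subgroupOf x)))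
    (e.surjective.comp (QuotientGroup.mk'_surjective _)) ?_
  rw [MonoidHom.ker_comp_of_injective _ _ e.injective, QuotientGroup.ker_mk', inf_subgroupOf_left]

theorem comap {f : G' →* G} (hf : Function.Surjective f) (h : IsCompositionStep A B) :
    IsCompositionStep (A.comap f) (B.comap f) := by
  have := h.normal
  have : IsSimpleGroup (B ⧸ A.subgroupOf B) := h.isSimpleGroup_quotient
  refine of_surjective (comap_mono h.le)
    ((QuotientGroup.mk' (A.subgroupOf B)).comp (f.subgroupComap B))
    ((QuotientGroup.mk'_surjective _).comp (f.subgroupComap_surjective_of_surjective B hf)) ?_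
  rw [← MonoidHom.comap_ker, QuotientGroup.ker_mk']
  rfl

theorem map {f : G →* G'} (hf : Function.Injective f) (h : IsCompositionStep A B) :
    IsCompositionStep (A.map f) (B.map f) := by
  have := h.normal
  have : IsSimpleGroup (B ⧸ A.subgroupOf B) := h.isSimpleGroup_quotient
  let e := B.equivMapOfInjective f hf
  refine of_surjective (map_mono h.le)
    ((QuotientGroup.mk' (A.subgroupOf B)).comp e.symm.toMonoidHom)
    ((QuotientGroup.mk'_surjective _).comp e.symm.surjective) ?_
  ext x
  obtain ⟨b, rfl⟩ := e.surjective x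
  simp [mem_subgroupOf, e, mem_map_iff_mem hf]

end IsCompositionStep

theorem isCompositionStep_bot_top [IsSimpleGroup G] : IsCompositionStep (⊥ : Subgroup G) ⊤ := by
  let e : (⊤ : Subgroup G) ≃* G := topEquiv
  refine .of_surjective bot_le e.toMonoidHom e.surjective ?_
  rw [bot_subgroupOf, eq_comm, MonoidHom.ker_eq_bot_iff]
  exact e.injective

theorem relIndex_sup_right_of_le_normalizer {H K : Subgroup G}
    (h : H ≤ normalizer (K : Set G)) : K.relIndex (H ⊔ K) = K.relIndex H := by
  have := normal_subgroupOf_of_le_normalizer h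
  have := normal_subgroupOf_sup_of_le_normalizer h
  exact Nat.card_congr (QuotientGroup.quotientInfEquivProdNormalizerQuotient H K h).toEquiv.symm

theorem relIndex_comap_comap_of_surjective {f : G' →* G} (hf : Function.Surjective f)
    (H K : Subgroup G) : (H.comap f).relIndex (K.comap f) = H.relIndex K := by
  rw [relIndex_comap, map_comap_eq_self_of_surjective hf]

end Subgroup

instance Subgroup.instJordanHolderLattice {G : Type*} [Group G] :
    JordanHolderLattice (Subgroup G) where
  IsMaximal := Subgroup.IsCompositionStep
  lt_of_isMaximal := Subgroup.IsCompositionStep.lt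
  sup_eq_of_isMaximal := Subgroup.IsCompositionStep.sup_eq_of_ne
  isMaximal_inf_left_of_isMaximal_sup _ hy := hy.inf_left

namespace CompositionSeries

open Subgroup
open scoped Finset

variable {G G' : Type*} [Group G] [Group G']

theorem relIndex_eq_of_iso {a b : Subgroup G × Subgroup G} (h : JordanHolderLattice.Iso a b) :
    a.1.relIndex a.2 = b.1.relIndex b.2 :=
  h.rel (fun a b => a.1.relIndex a.2 = b.1.relIndex b.2) rfl Eq.symm Eq.trans
    fun {x y} (hx : IsCompositionStep x (x ⊔ y)) => by
      have hy : y ≤ normalizer (x : Set G) :=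
        le_sup_right.trans ((normal_subgroupOf_iff_le_normalizer hx.le).1 hx.normal)
      rw [sup_comm, relIndex_sup_right_of_le_normalizer hy]
      exact (inf_relIndex_right x y).symm

noncomputable def factorCount (s : CompositionSeries (Subgroup G)) (n : ℕ) : ℕ :=
  #{i : Fin s.length | (s i.castSucc).relIndex (s i.succ) = n}

theorem factorCount_eq_of_equivalent {s t : CompositionSeries (Subgroup G)}
    (h : s.Equivalent t) (n : ℕ) : s.factorCount n = t.factorCount n := by
  obtain ⟨e, he⟩ := h
  refine Finset.card_equiv e fun i => ?_
  simp only [Finset.mem_filter, Finset.mem_univ, true_and, relIndex_eq_of_iso (he i)]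

theorem factorCount_smash {s t : CompositionSeries (Subgroup G)} (h : s.last = t.head) (n : ℕ) :
    factorCount (s.smash t h) n = s.factorCount n + t.factorCount n := by
  simp only [factorCount, Finset.card_filter]
  refine (Fin.sum_univ_add (a := s.length) (b := t.length) _).trans ?_
  -- the `smash_*` lemmas index by `Fin (s.length + t.length)`, not `Fin (s.smash t h).length`,
  -- so they only apply up to defeq
  congr 1 <;> refine Finset.sum_congr rfl fun i _ => ?_ <;> congr 3
  exacts [RelSeries.smash_castAdd h i, RelSeries.smash_succ_castAdd h i,
    RelSeries.smash_natAdd h i, RelSeries.smash_succ_natAdd h i]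

def mapOfInjective {f : G →* G'} (hf : Function.Injective f)
    (s : CompositionSeries (Subgroup G)) : CompositionSeries (Subgroup G') :=
  s.map ⟨Subgroup.map f, (·.map hf)⟩

def comapOfSurjective {f : G' →* G} (hf : Function.Surjective f)
    (s : CompositionSeries (Subgroup G)) : CompositionSeries (Subgroup G') :=
  s.map ⟨Subgroup.comap f, (·.comap hf)⟩

theorem factorCount_mapOfInjective {f : G →* G'} (hf : Function.Injective f)
    (s : CompositionSeries (Subgroup G)) (n : ℕ) :
    factorCount (mapOfInjective hf s) n = factorCount s n := by
  refine congrArg Finset.card (Finset.filter_congr fun i _ => ?_)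
  rw [← relIndex_map_map_of_injective _ _ hf]
  rfl

theorem factorCount_comapOfSurjective {f : G' →* G} (hf : Function.Surjective f)
    (s : CompositionSeries (Subgroup G)) (n : ℕ) :
    factorCount (comapOfSurjective hf s) n = factorCount s n := by
  refine congrArg Finset.card (Finset.filter_congr fun i _ => ?_)
  rw [← relIndex_comap_comap_of_surjective hf]
  rfl

end CompositionSeries

namespace GroupCompSeries

variable {G : Type*} [Group G]

def toCompositionSeries (S : GroupCompSeries G) : CompositionSeries (Subgroup G) where
  length := S.len
  toFun := S.ser
  step i := ⟨S.ser_le i, S.ser_normal i, S.ser_simple i⟩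

def ofCompositionSeries (s : CompositionSeries (Subgroup G)) (h₀ : s.head = ⊥)
    (h₁ : s.last = ⊤) : GroupCompSeries G where
  len := s.length
  ser := s
  ser_bot := h₀
  ser_top := h₁
  ser_le i := (s.step i).le
  ser_normal i := (s.step i).normal
  ser_simple i := (s.step i).isSimpleGroup_quotient

theorem count_eq_factorCount (S : GroupCompSeries G) (p : ℕ) :
    S.count p = S.toCompositionSeries.factorCount p :=
  rfl

end GroupCompSeries

section CompositionFactors

open CompositionSeries Subgroup

variable {G G' : Type*} [Group G] [Group G'] (p : ℕ)

theorem cp_eq_factorCount (s : CompositionSeries (Subgroup G)) (h₀ : s.head = ⊥)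
    (h₁ : s.last = ⊤) : cp p G = s.factorCount p := by
  have hS : Nonempty (GroupCompSeries G) := ⟨.ofCompositionSeries s h₀ h₁⟩
  rw [cp, dif_pos hS, GroupCompSeries.count_eq_factorCount]
  exact factorCount_eq_of_equivalent (jordan_holder hS.some.toCompositionSeries s
    (hS.some.ser_bot.trans h₀.symm) (hS.some.ser_top.trans h₁.symm)) p

theorem exists_compositionSeries_factorCount_eq_add (K : Subgroup G) [K.Normal]
    (s : CompositionSeries (Subgroup K)) (hs₀ : s.head = ⊥) (hs₁ : s.last = ⊤)
    (t : CompositionSeries (Subgroup (G ⧸ K))) (ht₀ : t.head = ⊥) (ht₁ : t.last = ⊤) :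
    ∃ u : CompositionSeries (Subgroup G), u.head = ⊥ ∧ u.last = ⊤ ∧
      ∀ n, u.factorCount n = s.factorCount n + t.factorCount n := by
  let s' := mapOfInjective K.subtype_injective s
  let t' := comapOfSurjective (QuotientGroup.mk'_surjective K) t
  have hlink : s'.last = t'.head := by
    simp [s', t', mapOfInjective, comapOfSurjective, hs₁, ht₀, ← MonoidHom.range_eq_map]
  refine ⟨s'.smash t' hlink, ?_, ?_, fun n => ?_⟩
  · simp [s', mapOfInjective, hs₀]
  · simp [t', comapOfSurjective, ht₁]
  · rw [factorCount_smash, factorCount_mapOfInjective, factorCount_comapOfSurjective]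

theorem exists_compositionSeries (G : Type*) [Group G] [Finite G] :
    ∃ s : CompositionSeries (Subgroup G), s.head = ⊥ ∧ s.last = ⊤ := by
  induction h : Nat.card G using Nat.strong_induction_on generalizing G with
  | _ n ih =>
  by_cases hG : Subsingleton G
  · exact ⟨RelSeries.singleton _ ⊥, rfl, Subsingleton.elim _ _⟩
  rw [not_subsingleton_iff_nontrivial] at hG
  by_cases hsimple : IsSimpleGroup G
  · exact ⟨(RelSeries.singleton _ ⊥).snoc ⊤ isCompositionStep_bot_top, rfl, rfl⟩
  obtain ⟨K, hK, hK₀, hK₁⟩ : ∃ K : Subgroup G, K.Normal ∧ K ≠ ⊥ ∧ K ≠ ⊤ := by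
    by_contra! hK
    exact hsimple ⟨fun K hK' => or_iff_not_imp_left.2 (hK K hK')⟩
  have hcard := K.card_eq_card_quotient_mul_card_subgroup
  have hK₀' := (one_lt_card_iff_ne_bot K).2 hK₀
  have hK₁' : 1 < Nat.card (G ⧸ K) := one_lt_index_of_ne_top hK₁
  obtain ⟨s, hs₀, hs₁⟩ := ih (Nat.card K) (by nlinarith) K rfl
  obtain ⟨t, ht₀, ht₁⟩ := ih (Nat.card (G ⧸ K)) (by nlinarith) (G ⧸ K) rfl
  obtain ⟨u, hu₀, hu₁, -⟩ :=
    exists_compositionSeries_factorCount_eq_add K s hs₀ hs₁ t ht₀ ht₁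
  exact ⟨u, hu₀, hu₁⟩

theorem cp_eq_zero_of_subsingleton [Subsingleton G] : cp p G = 0 :=
  cp_eq_factorCount p (RelSeries.singleton _ ⊥) rfl (Subsingleton.elim _ _)

theorem cp_eq_add [Finite G] (K : Subgroup G) [K.Normal] : cp p G = cp p K + cp p (G ⧸ K) := by
  obtain ⟨s, hs₀, hs₁⟩ := exists_compositionSeries K
  obtain ⟨t, ht₀, ht₁⟩ := exists_compositionSeries (G ⧸ K)
  obtain ⟨u, hu₀, hu₁, hu⟩ :=
    exists_compositionSeries_factorCount_eq_add K s hs₀ hs₁ t ht₀ ht₁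
  rw [cp_eq_factorCount p u hu₀ hu₁, hu, cp_eq_factorCount p s hs₀ hs₁,
    cp_eq_factorCount p t ht₀ ht₁]

theorem cp_congr [Finite G] (e : G ≃* G') : cp p G = cp p G' := by
  obtain ⟨s, hs₀, hs₁⟩ := exists_compositionSeries G
  have hf : Function.Injective e.toMonoidHom := e.injective
  rw [cp_eq_factorCount p s hs₀ hs₁, cp_eq_factorCount p (mapOfInjective hf s) ?_ ?_,
    factorCount_mapOfInjective]
  · simp [mapOfInjective, hs₀]
  · simp [mapOfInjective, hs₁]

theorem cp_subgroup_eq_add (f : G →* G') (Γ : Subgroup G) [Finite Γ] :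
    cp p Γ = cp p (Γ ⊓ f.ker : Subgroup G) + cp p (Γ.map f) := by
  let φ := f.comp Γ.subtype
  have hker : φ.ker = (Γ ⊓ f.ker).subgroupOf Γ := by
    rw [inf_subgroupOf_left, ← comap_subtype, ← MonoidHom.comap_ker]
  have hrange : φ.range = Γ.map f := by
    rw [MonoidHom.range_comp, range_subtype]
  rw [cp_eq_add p φ.ker, cp_congr p (QuotientGroup.quotientKerEquivRange φ), hrange, hker,
    cp_congr p (subgroupOfEquivOfLe inf_le_left)]

theorem cp_map_le (f : G →* G') (Γ : Subgroup G) [Finite Γ] : cp p (Γ.map f) ≤ cp p Γ := by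
  rw [cp_subgroup_eq_add p f Γ]
  exact Nat.le_add_left _ _

theorem cp_le_of_le_normalizer {A B : Subgroup G} [Finite B] (hAB : A ≤ B)
    (hB : B ≤ normalizer (A : Set G)) : cp p A ≤ cp p B := by
  have := normal_subgroupOf_of_le_normalizer hB
  rw [cp_eq_add p (A.subgroupOf B), cp_congr p (subgroupOfEquivOfLe hAB)]
  exact Nat.le_add_right _ _

theorem cp_le_sum_cp_map_eval {ι : Type*} [DecidableEq ι] {H : ι → Type*} [∀ i, Group (H i)]
    (s : Finset ι) (Γ : Subgroup (∀ i, H i)) [Finite Γ]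
    (hΓ : ∀ g ∈ Γ, ∀ i ∉ s, g i = 1) :
    cp p Γ ≤ ∑ i ∈ s, cp p (Γ.map (Pi.evalMonoidHom H i)) := by
  induction s using Finset.induction_on generalizing Γ with
  | empty =>
    have : Subsingleton Γ := ⟨fun a b => Subtype.ext <| funext fun i =>
      (hΓ a a.2 i (Finset.notMem_empty i)).trans (hΓ b b.2 i (Finset.notMem_empty i)).symm⟩
    rw [cp_eq_zero_of_subsingleton]
    exact Nat.zero_le _
  | insert a s ha ih =>
    let π i := Pi.evalMonoidHom H i
    let Γ₀ := Γ ⊓ (π a).ker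
    have : Finite Γ₀ := Finite.of_injective _ (inclusion_injective inf_le_left)
    have hΓ₀ : ∀ g ∈ Γ₀, ∀ i ∉ s, g i = 1 := fun g hg i hi => by
      by_cases hia : i = a
      · exact hia ▸ hg.2
      · exact hΓ g hg.1 i (by simp [hia, hi])
    have hnorm : Γ ≤ normalizer (Γ₀ : Set (∀ i, H i)) :=
      (le_inf Γ.le_normalizer (by simp [normalizer_eq_top])).trans
        inf_normalizer_le_normalizer_inf
    calc cp p Γ = cp p Γ₀ + cp p (Γ.map (π a)) := cp_subgroup_eq_add p (π a) Γ
      _ ≤ ∑ i ∈ s, cp p (Γ₀.map (π i)) + cp p (Γ.map (π a)) := by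
        gcongr
        exact ih Γ₀ hΓ₀
      _ ≤ ∑ i ∈ s, cp p (Γ.map (π i)) + cp p (Γ.map (π a)) := by
        gcongr with i
        have := Finite.of_surjective _ ((π i).subgroupMap_surjective Γ)
        exact cp_le_of_le_normalizer p (map_mono inf_le_left)
          ((map_mono hnorm).trans (le_normalizer_map _))
      _ = ∑ i ∈ insert a s, cp p (Γ.map (π i)) := by rw [Finset.sum_insert ha, add_comm]

end CompositionFactors

theorem cp_le_sum_of_subgroup_central_product_general (p : ℕ)
    (r : ℕ) (H : Fin r → Type) [∀ i, Group (H i)] [∀ i, Finite (H i)]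
    (N : Subgroup (∀ i, H i)) [N.Normal]
    (G : Subgroup ((∀ i, H i) ⧸ N))
    (hsurj : ∀ i : Fin r, ∀ x : H i, ∃ g ∈ G.comap (QuotientGroup.mk' N), g i = x) :
    cp p ↥G ≤ ∑ i : Fin r, cp p (H i) := by
  set Γ := G.comap (QuotientGroup.mk' N)
  have hΓ : ∀ i, Γ.map (Pi.evalMonoidHom H i) = ⊤ := fun i =>
    eq_top_iff.2 fun x _ => hsurj i x
  calc cp p G = cp p (Γ.map (QuotientGroup.mk' N)) := by
        rw [Subgroup.map_comap_eq_self_of_surjective (QuotientGroup.mk'_surjective N)]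
    _ ≤ cp p Γ := cp_map_le p _ Γ
    _ ≤ ∑ i, cp p (Γ.map (Pi.evalMonoidHom H i)) :=
        cp_le_sum_cp_map_eval p Finset.univ Γ fun _ _ i hi => absurd (Finset.mem_univ i) hi
    _ = ∑ i, cp p (H i) := Finset.sum_congr rfl fun i _ => by
        rw [hΓ i]
        exact cp_congr p Subgroup.topEquiv

/-- If `G` is a subgroup of a central product `(H_1 × ⋯ × H_r)/N` (with `N` central) whose
full preimage projects onto each `H_i`, then `c_p(G) ≤ c_p(H_1) + ⋯ + c_p(H_r)`. -/
theorem cp_le_sum_of_subgroup_central_product (p : ℕ) (hp : p.Prime)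
    (r : ℕ) (H : Fin r → Type) [∀ i, Group (H i)] [∀ i, Finite (H i)]
    (N : Subgroup (∀ i, H i)) [N.Normal] (hN : N ≤ Subgroup.center (∀ i, H i))
    (G : Subgroup ((∀ i, H i) ⧸ N))
    (hsurj : ∀ i : Fin r, ∀ x : H i, ∃ g ∈ G.comap (QuotientGroup.mk' N), g i = x) :
    cp p ↥G ≤ ∑ i : Fin r, cp p (H i) :=
  cp_le_sum_of_subgroup_central_product_general p r H N G hsurj
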